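/- The number of strings of length n over the alphabet {=, <, >} with no two consecutive symbols from {<, >} and whose first symbol is '=' (or n = 0) equals J(n+1), where J is the Jacobsthal sequence. -/
import Mathlib

def J : ℕ → ℕ
  | 0 => 0
  | 1 => 1
  | (n + 2) => J (n + 1) + 2 * J n

def A (n : ℕ) : ℕ :=
  Fintype.card {s : Fin n → Fin 3 //
      (∀ i j : Fin n, (j : ℕ) = (i : ℕ) + 1 → s i ≠ 0 → s j = 0) ∧
      ∀ h : 0 < n, s ⟨0, h⟩ = 0}

abbrev Pr (n : ℕ) (s : Fin n → Fin 3) : Prop :=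
  (∀ i j : Fin n, (j : ℕ) = (i : ℕ) + 1 → s i ≠ 0 → s j = 0) ∧
      ∀ h : 0 < n, s ⟨0, h⟩ = 0

lemma P_cons0 {n : ℕ} {t : Fin n → Fin 3} (ht : Pr n t) : Pr (n+1) (Fin.cons 0 t) := by
  constructor
  · intro i j hij hi
    rcases Fin.eq_zero_or_eq_succ i with rfl | ⟨k, rfl⟩
    · simp [Fin.cons_zero] at hi
    · rcases Fin.eq_zero_or_eq_succ j with rfl | ⟨m, rfl⟩
      · simp at hij
      · simp only [Fin.cons_succ] at hi ⊢
        exact ht.1 k m (by simpa using hij) hi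
  · intro h
    have : (⟨0, h⟩ : Fin (n+1)) = 0 := by ext; simp
    rw [this, Fin.cons_zero]

lemma P_tail {n : ℕ} {s : Fin (n+1) → Fin 3}
    (hs : ∀ i j : Fin (n+1), (j : ℕ) = (i : ℕ) + 1 → s i ≠ 0 → s j = 0)
    (h1 : ∀ h : 0 < n, Fin.tail s ⟨0, h⟩ = 0) : Pr n (Fin.tail s) := by
  refine ⟨?_, h1⟩
  intro i j hij hi
  exact hs i.succ j.succ (by simp [hij]) hi

set_option maxHeartbeats 2000000 in
def equivRec (n : ℕ) :
    {s : Fin (n+2) → Fin 3 // Pr (n+2) s} ≃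
      {s : Fin (n+1) → Fin 3 // Pr (n+1) s} ⊕
        (Fin 2 × {s : Fin n → Fin 3 // Pr n s}) where
  toFun s :=
    if h : s.val 1 = 0 then
      Sum.inl ⟨Fin.tail s.val, P_tail s.2.1 (by
        intro _
        have : (⟨0, Nat.succ_pos n⟩ : Fin (n+1)).succ = 1 := by ext; simp
        simpa [Fin.tail, this] using h)⟩
    else
      Sum.inr (⟨(s.val 1).val - 1, by omega⟩,
        ⟨Fin.tail (Fin.tail s.val), by
          refine P_tail (fun i j hij hi => ?_) ?_
          · exact s.2.1 i.succ j.succ (by simp [hij]) hi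
          · intro hn
            have h2 : ((⟨0, hn⟩ : Fin n).succ.succ : Fin (n+2)) = ⟨2, by omega⟩ := rfl
            have := s.2.1 1 ⟨2, by omega⟩ rfl h
            simpa [Fin.tail, h2] using this⟩)
  invFun x :=
    match x with
    | Sum.inl t => ⟨Fin.cons 0 t.val, P_cons0 t.2⟩
    | Sum.inr (a, t) =>
        ⟨Fin.cons 0 (Fin.cons ⟨(a : ℕ) + 1, by omega⟩ t.val), by
          refine ⟨?_, ?_⟩
          · intro i j hij hi
            rcases Fin.eq_zero_or_eq_succ i with rfl | ⟨k, rfl⟩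
            · simp at hi
            · rcases Fin.eq_zero_or_eq_succ j with rfl | ⟨m, rfl⟩
              · simp at hij
              · simp only [Fin.cons_succ] at hi ⊢
                rcases Fin.eq_zero_or_eq_succ m with rfl | ⟨m', rfl⟩
                · simp at hij
                · simp only [Fin.cons_succ]
                  rcases Fin.eq_zero_or_eq_succ k with rfl | ⟨k', rfl⟩
                  · -- m'.succ index into t with m' = 0
                    have hm' : (m' : ℕ) = 0 := by simpa using hij
                    have hn : 0 < n := by omega
                    have : m' = ⟨0, hn⟩ := by exact Fin.ext hm'
                    rw [this]
                    exact t.2.2 hn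
                  · exact t.2.1 k' m' (by simpa using hij) hi
          · intro h
            have : (⟨0, h⟩ : Fin (n+2)) = 0 := by ext; simp
            rw [this, Fin.cons_zero]⟩
  left_inv s := by
    have h0 : s.val 0 = 0 := by
      have := s.2.2 (by omega)
      simpa using this
    by_cases h : s.val 1 = 0
    · simp only [h, dif_pos]
      apply Subtype.ext
      funext i
      rcases Fin.eq_zero_or_eq_succ i with rfl | ⟨k, rfl⟩
      · simpa using h0.symm
      · simp [Fin.tail]
    · simp only [h, dif_neg, not_false_iff]
      apply Subtype.ext
      funext i
      rcases Fin.eq_zero_or_eq_succ i with rfl | ⟨k, rfl⟩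
      · simpa using h0.symm
      · dsimp only
        rw [Fin.cons_succ]
        rcases Fin.eq_zero_or_eq_succ k with rfl | ⟨m, rfl⟩
        · rw [Fin.cons_zero, Fin.succ_zero_eq_one]
          apply Fin.ext
          have hv : (s.val 1).val ≠ 0 := fun hc => h (Fin.ext hc)
          simp
          omega
        · rw [Fin.cons_succ]
          rfl
  right_inv x := by
    match x with
    | Sum.inl t =>
        have h1 : (Fin.cons 0 t.val : Fin (n+2) → Fin 3) 1 = 0 := by
          rw [← Fin.succ_zero_eq_one, Fin.cons_succ]
          exact t.2.2 (by omega)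
        simp only [h1, dif_pos]
        congr 1
    | Sum.inr (a, t) =>
        have h1 : (Fin.cons 0 (Fin.cons ⟨(a : ℕ) + 1, by omega⟩ t.val) : Fin (n+2) → Fin 3) 1
            = ⟨(a : ℕ) + 1, by omega⟩ := by
          rw [← Fin.succ_zero_eq_one, Fin.cons_succ, Fin.cons_zero]
        have h1' : (Fin.cons 0 (Fin.cons ⟨(a : ℕ) + 1, by omega⟩ t.val) : Fin (n+2) → Fin 3) 1 ≠ 0 := by
          rw [h1]
          intro hc
          have := congrArg Fin.val hc
          simp at this
        simp only [h1', dif_neg, not_false_iff]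
        refine congrArg Sum.inr (Prod.ext ?_ (Subtype.ext ?_))
        · dsimp only
          apply Fin.ext
          simp only [h1]
          simp
        · dsimp only
          rw [Fin.tail_cons, Fin.tail_cons]

lemma A_rec (n : ℕ) : A (n + 2) = A (n + 1) + 2 * A n := by
  unfold A
  rw [Fintype.card_congr (equivRec n), Fintype.card_sum, Fintype.card_prod, Fintype.card_fin]

lemma A_eq (n : ℕ) : A n = J (n + 1) := by
  induction n using Nat.twoStepInduction with
  | zero => decide
  | one => decide
  | more n ih1 ih2 =>
    rw [A_rec, ih1, ih2]
    rfl

/-- Symbols: `0` = '=', `1` = '<', `2` = '>'. No two consecutive imbalances,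
and the first symbol (if any) is '='. -/
theorem count_no_two_consecutive_imbalances_first_balance (n : ℕ) :
    Fintype.card {s : Fin n → Fin 3 //
      (∀ i j : Fin n, (j : ℕ) = (i : ℕ) + 1 → s i ≠ 0 → s j = 0) ∧
      ∀ h : 0 < n, s ⟨0, h⟩ = 0} = J (n + 1) := by
  exact A_eq n
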